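/- arXiv:1811.02463 — 2 statements merged into one kernel-verified Lean document; each statement's English description precedes it below -/
import Mathlib

section
/- Let f be a nonnegative function in BMO ∩ L¹(ℝ^d). Then there exist constants C, c > 0 depending only on d such that for every λ > a (where a is the dimensional John–Nirenberg constant), ∫_{ℝ^d} (f(x) − λ(‖f‖_{L¹} + ‖f‖_{BMO}))₊ dx ≤ C exp(−cλ) ‖f‖_{L¹}. -/
/-!
Tile `ℝᵈ` by the unit cubes centred at integer points; up to a null set each is a sup-norm ball `K`
of radius `1/2`, so it has volume `1` and the mean of `f` on `K` is `∫_K f ≤ ‖f‖₁`. For `λ ≥ 1` the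
part of `K` where `f - λ(‖f‖₁ + B) > t` therefore lies in `{|f - ⨍_K f| > λB + t}`, and the
John–Nirenberg inequality together with `∫_K |f - ⨍_K f| ≤ 2 ∫_K f` bounds its measure by
`(2A/B) e^{-bλ} e^{-bt/B} ∫_K f`. Integrating in `t` (layer cake) gives `(2A/b) e^{-bλ} ∫_K f`, and
summing over the cubes gives the bound with `‖f‖₁`. For `λ < 1` the trivial bound by `‖f‖₁` suffices.
-/

open MeasureTheory Real Set

section

variable {α : Type*} [MeasurableSpace α] {μ : Measure α}

theorem lintegral_ofReal_le_of_meas_lt_le_exp {g : α → ℝ} (hg₀ : 0 ≤ᵐ[μ] g)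
    (hg : AEMeasurable g μ) {K r : ℝ} (hr : 0 < r)
    (htail : ∀ t, 0 < t → μ {x | t < g x} ≤ ENNReal.ofReal (K * exp (-r * t))) :
    ∫⁻ x, ENNReal.ofReal (g x) ∂μ ≤ ENNReal.ofReal (K / r) := by
  have hexp : ∫⁻ t in Ioi 0, ENNReal.ofReal (exp (-r * t)) = ENNReal.ofReal r⁻¹ := by
    rw [← ofReal_integral_eq_lintegral_ofReal (exp_neg_integrableOn_Ioi 0 hr)
      (ae_of_all _ fun _ => (exp_pos _).le), integral_exp_mul_Ioi (neg_lt_zero.2 hr)]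
    simp
  calc ∫⁻ x, ENNReal.ofReal (g x) ∂μ = ∫⁻ t in Ioi 0, μ {x | t < g x} :=
        lintegral_eq_lintegral_meas_lt μ hg₀ hg
    _ ≤ ∫⁻ t in Ioi 0, ENNReal.ofReal K * ENNReal.ofReal (exp (-r * t)) :=
        setLIntegral_mono' measurableSet_Ioi fun t ht =>
          (htail t ht).trans_eq (ENNReal.ofReal_mul' (exp_pos _).le)
    _ = ENNReal.ofReal (K / r) := by
        rw [lintegral_const_mul' _ _ ENNReal.ofReal_ne_top, hexp,
          ← ENNReal.ofReal_mul' (inv_nonneg.2 hr.le), div_eq_mul_inv]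

theorem integral_abs_sub_average_le [IsFiniteMeasure μ] {f : α → ℝ} (hf : Integrable f μ)
    (hf₀ : 0 ≤ᵐ[μ] f) :
    ∫ x, |f x - ⨍ y, f y ∂μ| ∂μ ≤ 2 * ∫ x, f x ∂μ := by
  have hc : 0 ≤ ⨍ y, f y ∂μ := by
    rw [average_eq, smul_eq_mul]
    exact mul_nonneg (inv_nonneg.2 measureReal_nonneg) (integral_nonneg_of_ae hf₀)
  set c := ⨍ y, f y ∂μ
  calc ∫ x, |f x - c| ∂μ ≤ ∫ x, (f x + c) ∂μ := by
        refine integral_mono_ae (hf.sub (integrable_const c)).abs (hf.add (integrable_const c)) ?_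
        filter_upwards [hf₀] with x (hx : 0 ≤ f x)
        exact abs_sub_le_iff.2 ⟨by linarith, by linarith⟩
    _ = 2 * ∫ x, f x ∂μ := by
        rw [integral_add hf (integrable_const c), integral_average]
        ring

theorem setLIntegral_excess_le_of_johnNirenberg {K : Set α} (hK : MeasurableSet K)
    (hμK : μ K ≠ ⊤) {f : α → ℝ} (hf₀ : ∀ x, 0 ≤ f x) (hfK : IntegrableOn f K μ)
    {A a b B lam M : ℝ} (hA : 0 ≤ A) (hb : 0 < b) (hB : 0 < B) (hlam : a < lam)
    (havg : ⨍ x in K, f x ∂μ ≤ lam * M)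
    (hJN : ∀ s, a * B < s → μ {x ∈ K | s < |f x - ⨍ y in K, f y ∂μ|} ≤
      ENNReal.ofReal (A / B * exp (-(b * s) / B) * ∫ y in K, |f y - ⨍ w in K, f w ∂μ| ∂μ)) :
    ∫⁻ x in K, ENNReal.ofReal (max (f x - lam * (M + B)) 0) ∂μ ≤
      ENNReal.ofReal (2 * A / b * exp (-(b * lam)) * ∫ x in K, f x ∂μ) := by
  set I := ∫ x in K, f x ∂μ
  set c := ⨍ x in K, f x ∂μ
  have hosc : ∫ x in K, |f x - c| ∂μ ≤ 2 * I :=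
    have := isFiniteMeasure_restrict.2 hμK
    integral_abs_sub_average_le hfK (ae_of_all _ hf₀)
  have htail : ∀ t, 0 < t → μ.restrict K {x | t < max (f x - lam * (M + B)) 0} ≤
      ENNReal.ofReal (2 * A * I / B * exp (-(b * lam)) * exp (-(b / B) * t)) := by
    intro t ht
    have hsub : {x | t < max (f x - lam * (M + B)) 0} ∩ K ⊆
        {x ∈ K | lam * B + t < |f x - c|} := by
      rintro x ⟨hx, hxK⟩
      have hx : t < f x - lam * (M + B) := (lt_max_iff.1 hx).resolve_right ht.not_gt
      exact ⟨hxK, lt_of_lt_of_le (by linarith) (le_abs_self _)⟩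
    have hexp : exp (-(b * (lam * B + t)) / B) = exp (-(b * lam)) * exp (-(b / B) * t) := by
      rw [← exp_add]
      congr 1
      field_simp
      ring
    rw [Measure.restrict_apply' hK]
    calc _ ≤ μ {x ∈ K | lam * B + t < |f x - c|} := measure_mono hsub
      _ ≤ _ := hJN _ (by nlinarith)
      _ ≤ _ := by
        refine ENNReal.ofReal_le_ofReal ?_
        rw [hexp]
        calc A / B * (exp (-(b * lam)) * exp (-(b / B) * t)) * ∫ x in K, |f x - c| ∂μ
            ≤ A / B * (exp (-(b * lam)) * exp (-(b / B) * t)) * (2 * I) := by gcongr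
          _ = _ := by ring
  refine (lintegral_ofReal_le_of_meas_lt_le_exp (ae_of_all _ fun _ => le_max_right _ _)
    ((hfK.aemeasurable.sub_const _).max aemeasurable_const) (div_pos hb hB) htail).trans_eq ?_
  congr 1
  field_simp

theorem integral_max_sub_le_integral {f : α → ℝ} (hf₀ : ∀ x, 0 ≤ f x) (hf : Integrable f μ)
    {c : ℝ} (hc : 0 ≤ c) : ∫ x, max (f x - c) 0 ∂μ ≤ ∫ x, f x ∂μ :=
  integral_mono_of_nonneg (ae_of_all _ fun _ => le_max_right _ _) hf
    (ae_of_all _ fun x => max_le (by linarith) (hf₀ x))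

end

section IntegerTiling

variable {ι : Type*}

def halfOpenUnitCube (z : ι → ℤ) : Set (ι → ℝ) :=
  univ.pi fun i => Ico ((z i : ℝ) - 2⁻¹) (z i + 2⁻¹)

theorem measurableSet_halfOpenUnitCube [Fintype ι] (z : ι → ℤ) :
    MeasurableSet (halfOpenUnitCube z) :=
  .univ_pi fun _ => measurableSet_Ico

theorem eq_floor_of_mem_halfOpenUnitCube {x : ι → ℝ} {z : ι → ℤ}
    (hx : x ∈ halfOpenUnitCube z) : z = fun i => ⌊x i + 2⁻¹⌋ := by
  funext i
  have := hx i (mem_univ i)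
  rw [eq_comm, Int.floor_eq_iff]
  constructor <;> linarith [this.1, this.2]

theorem pairwise_disjoint_halfOpenUnitCube :
    Pairwise (Function.onFun Disjoint (halfOpenUnitCube (ι := ι))) := fun _ _ hne =>
  disjoint_left.2 fun _ hz hz' =>
    hne ((eq_floor_of_mem_halfOpenUnitCube hz).trans (eq_floor_of_mem_halfOpenUnitCube hz').symm)

theorem iUnion_halfOpenUnitCube : ⋃ z, halfOpenUnitCube z = (univ : Set (ι → ℝ)) := by
  refine eq_univ_of_forall fun x => mem_iUnion.2 ⟨fun i => ⌊x i + 2⁻¹⌋, fun i _ => ?_⟩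
  have := Int.floor_le (x i + 2⁻¹)
  have := Int.lt_floor_add_one (x i + 2⁻¹)
  constructor <;> linarith

theorem halfOpenUnitCube_subset_closedBall [Fintype ι] (z : ι → ℤ) :
    halfOpenUnitCube z ⊆ Metric.closedBall (fun i => (z i : ℝ)) 2⁻¹ := fun x hx => by
  refine (dist_pi_le_iff (by norm_num)).2 fun i => ?_
  have := hx i (mem_univ i)
  rw [Real.dist_eq, abs_le]
  constructor <;> linarith [this.1, this.2]

theorem volume_halfOpenUnitCube [Fintype ι] (z : ι → ℤ) : volume (halfOpenUnitCube z) = 1 := by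
  norm_num [halfOpenUnitCube, volume_pi_pi, Real.volume_Ico]

theorem volume_closedBall_half [Fintype ι] (x : ι → ℝ) : volume (Metric.closedBall x 2⁻¹) = 1 := by
  rw [Real.volume_pi_closedBall x (by norm_num)]
  norm_num

theorem halfOpenUnitCube_ae_eq_closedBall [Fintype ι] (z : ι → ℤ) :
    halfOpenUnitCube z =ᵐ[volume] Metric.closedBall (fun i => (z i : ℝ)) 2⁻¹ :=
  ae_eq_of_subset_of_measure_ge (halfOpenUnitCube_subset_closedBall z)
    (by rw [volume_halfOpenUnitCube, volume_closedBall_half])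
    (measurableSet_halfOpenUnitCube z).nullMeasurableSet
    (by rw [volume_closedBall_half]; exact ENNReal.one_ne_top)

theorem lintegral_eq_tsum_setLIntegral_closedBall_half [Fintype ι] (g : (ι → ℝ) → ENNReal) :
    ∫⁻ x, g x = ∑' z : ι → ℤ, ∫⁻ x in Metric.closedBall (fun i => (z i : ℝ)) 2⁻¹, g x := by
  rw [← setLIntegral_univ, ← iUnion_halfOpenUnitCube,
    lintegral_iUnion measurableSet_halfOpenUnitCube pairwise_disjoint_halfOpenUnitCube]
  exact tsum_congr fun z => setLIntegral_congr (halfOpenUnitCube_ae_eq_closedBall z)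

end IntegerTiling

theorem integral_excess_le_of_johnNirenberg {ι : Type*} [Fintype ι] {f : (ι → ℝ) → ℝ}
    (hf₀ : ∀ x, 0 ≤ f x) (hf : Integrable f) {A a b B lam : ℝ} (hA : 0 ≤ A) (hb : 0 < b)
    (hB : 0 < B) (hlam : a < lam) (hlam₁ : 1 ≤ lam)
    (hJN : ∀ z : ι → ℝ, ∀ s, a * B < s →
      volume {x ∈ Metric.closedBall z 2⁻¹ | s < |f x - ⨍ y in Metric.closedBall z 2⁻¹, f y|} ≤
        ENNReal.ofReal (A / B * exp (-(b * s) / B) *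
          ∫ y in Metric.closedBall z 2⁻¹, |f y - ⨍ w in Metric.closedBall z 2⁻¹, f w|)) :
    ∫ x, max (f x - lam * ((∫ y, f y) + B)) 0 ≤ 2 * A / b * exp (-(b * lam)) * ∫ y, f y := by
  set M := ∫ y, f y
  set C := 2 * A / b * exp (-(b * lam))
  have hC : 0 ≤ C := by positivity
  have hf₀' : 0 ≤ᵐ[volume] f := ae_of_all _ hf₀
  have hcube (z : ι → ℝ) : ∫⁻ x in Metric.closedBall z 2⁻¹,
      ENNReal.ofReal (max (f x - lam * (M + B)) 0) ≤
        ENNReal.ofReal C * ∫⁻ x in Metric.closedBall z 2⁻¹, ENNReal.ofReal (f x) := by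
    have havg : ⨍ x in Metric.closedBall z 2⁻¹, f x ≤ lam * M := by
      rw [setAverage_eq, measureReal_def, volume_closedBall_half, ENNReal.toReal_one, inv_one,
        one_smul]
      exact (setIntegral_le_integral hf hf₀').trans
        (le_mul_of_one_le_left (integral_nonneg hf₀) hlam₁)
    refine (setLIntegral_excess_le_of_johnNirenberg Metric.isClosed_closedBall.measurableSet
      measure_closedBall_lt_top.ne hf₀ hf.integrableOn hA hb hB hlam havg (hJN z)).trans_eq ?_
    rw [ENNReal.ofReal_mul hC, ofReal_integral_eq_lintegral_ofReal hf.integrableOn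
      (ae_restrict_of_ae hf₀')]
  have hlint : ∫⁻ x, ENNReal.ofReal (max (f x - lam * (M + B)) 0) ≤ ENNReal.ofReal (C * M) :=
    calc ∫⁻ x, ENNReal.ofReal (max (f x - lam * (M + B)) 0)
        ≤ ∑' z : ι → ℤ, ENNReal.ofReal C *
            ∫⁻ x in Metric.closedBall (fun i => (z i : ℝ)) 2⁻¹, ENNReal.ofReal (f x) := by
          rw [lintegral_eq_tsum_setLIntegral_closedBall_half]
          exact ENNReal.tsum_le_tsum fun z => hcube _
      _ = ENNReal.ofReal (C * M) := by
          rw [ENNReal.tsum_mul_left, ← lintegral_eq_tsum_setLIntegral_closedBall_half,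
            ENNReal.ofReal_mul hC, ofReal_integral_eq_lintegral_ofReal hf hf₀']
  rw [integral_eq_lintegral_of_nonneg_ae (f := fun x => max (f x - lam * (M + B)) 0)
    (ae_of_all _ fun _ => le_max_right _ _)
    ((hf.aemeasurable.sub_const _).max aemeasurable_const).aestronglyMeasurable]
  exact ENNReal.toReal_le_of_le_ofReal (mul_nonneg hC (integral_nonneg hf₀)) hlint

/-- BMO decay lemma: let `f ≥ 0` be integrable on `ℝᵈ` with BMO (semi)norm `B`, satisfying
the John–Nirenberg inequality with dimensional constants `A, a, b` on every cube
(closed ball for the sup norm on `Fin d → ℝ`).  Then there are constants `C, c > 0`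
depending only on the dimension (through `A, a, b`) such that for every `λ > a`,
`∫ (f − λ(‖f‖₁ + B))₊ ≤ C exp(−cλ) ‖f‖₁`. -/
theorem stmt0 (d : ℕ) (A a b : ℝ) (hA : 0 < A) (ha : 0 < a) (hb : 0 < b) :
    ∃ C c : ℝ, 0 < C ∧ 0 < c ∧
      ∀ f : (Fin d → ℝ) → ℝ, Measurable f → (∀ x, 0 ≤ f x) → Integrable f →
      ∀ B : ℝ, 0 < B →
      -- John–Nirenberg inequality for `f` with BMO norm `B`:
      (∀ (z : Fin d → ℝ) (ρ : ℝ), 0 < ρ → ∀ s : ℝ, a * B < s →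
        volume {x ∈ Metric.closedBall z ρ |
            s < |f x - ⨍ y in Metric.closedBall z ρ, f y|} ≤
          ENNReal.ofReal ((A / B) * Real.exp (-(b * s) / B) *
            ∫ y in Metric.closedBall z ρ,
              |f y - ⨍ w in Metric.closedBall z ρ, f w|)) →
      ∀ lam : ℝ, a < lam →
        ∫ x, max (f x - lam * ((∫ y, f y) + B)) 0 ≤
          C * Real.exp (-(c * lam)) * ∫ y, f y := by
  refine ⟨2 * A / b + exp b, b, by positivity, hb, ?_⟩
  intro f _ hf₀ hf B hB hJN lam hlam
  have hM : 0 ≤ ∫ y, f y := integral_nonneg hf₀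
  rcases lt_or_ge lam 1 with hlam₁ | hlam₁
  · have hexp : 1 ≤ exp b * exp (-(b * lam)) := by
      rw [← exp_add]
      exact one_le_exp (by nlinarith)
    calc ∫ x, max (f x - lam * ((∫ y, f y) + B)) 0
        ≤ ∫ y, f y := integral_max_sub_le_integral hf₀ hf (by nlinarith)
      _ ≤ exp b * exp (-(b * lam)) * ∫ y, f y := le_mul_of_one_le_left hM hexp
      _ ≤ (2 * A / b + exp b) * exp (-(b * lam)) * ∫ y, f y := by
        gcongr
        linarith [show 0 ≤ 2 * A / b by positivity]
  · calc ∫ x, max (f x - lam * ((∫ y, f y) + B)) 0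
        ≤ 2 * A / b * exp (-(b * lam)) * ∫ y, f y :=
          integral_excess_le_of_johnNirenberg hf₀ hf hA.le hb hB hlam hlam₁
            fun z => hJN z 2⁻¹ (by norm_num)
      _ ≤ (2 * A / b + exp b) * exp (-(b * lam)) * ∫ y, f y := by
        gcongr
        linarith [exp_pos b]
end

section
/- Let f : ℝ^d → ℝ be nonnegative and measurable on a cube K, let M > 0, and suppose ℒ^d({x ∈ K : f(x) − (f)_K > r}) ≤ (A/M) exp(−br/M) ∫_K |f − (f)_K| dx for all r > aM, where (f)_K ≤ λM for some λ > a. Then ∫_K (f(x) − 2λM)₊ dx ≤ (2A/b)(bλ + 1) exp(−bλ) ∫_K |f − (f)_K| dx. -/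
open MeasureTheory Real Set

/-!
By the layer-cake formula, `∫_K (f − 2λM)₊ = ∫_0^∞ ℒᵈ({x ∈ K : f(x) − 2λM > t}) dt`. Since
`(f)_K ≤ λM`, the set at level `t` lies in `{f − (f)_K > t + λM}`, and `t + λM > aM`, so the
hypothesis bounds its measure by `(A/M) e^{−bλ} e^{−bt/M} ∫_K |f − (f)_K|`. Integrating in `t`
gives the sharper bound `(A/b) e^{−bλ} ∫_K |f − (f)_K|`.
-/

theorem integral_le_of_measure_lt_le_exp {α : Type*} [MeasurableSpace α] {μ : Measure α}
    {g : α → ℝ} (hg0 : 0 ≤ᵐ[μ] g) (hg : AEMeasurable g μ) {C c : ℝ} (hC : 0 ≤ C) (hc : 0 < c)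
    (h : ∀ t ∈ Ioi (0 : ℝ), μ {x | t < g x} ≤ ENNReal.ofReal (C * exp (-c * t))) :
    ∫ x, g x ∂μ ≤ C / c := by
  have hint : IntegrableOn (fun t => C * exp (-c * t)) (Ioi 0) :=
    (exp_neg_integrableOn_Ioi 0 hc).const_mul C
  have hval : ∫ t in Ioi (0 : ℝ), C * exp (-c * t) = C / c := by
    rw [integral_const_mul, integral_exp_mul_Ioi (neg_lt_zero.mpr hc)]
    field_simp
    simp
  have hbound : ∫⁻ t in Ioi 0, ENNReal.ofReal (C * exp (-c * t)) = ENNReal.ofReal (C / c) := by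
    rw [← ofReal_integral_eq_lintegral_ofReal hint (ae_of_all _ fun t => by positivity), hval]
  calc ∫ x, g x ∂μ = (∫⁻ x, ENNReal.ofReal (g x) ∂μ).toReal :=
        integral_eq_lintegral_of_nonneg_ae hg0 hg.aestronglyMeasurable
    _ = (∫⁻ t in Ioi 0, μ {x | t < g x}).toReal := by
        rw [lintegral_eq_lintegral_meas_lt μ hg0 hg]
    _ ≤ (ENNReal.ofReal (C / c)).toReal :=
        ENNReal.toReal_mono ENNReal.ofReal_ne_top
          (hbound ▸ setLIntegral_mono' measurableSet_Ioi h)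
    _ = C / c := ENNReal.toReal_ofReal (div_nonneg hC hc.le)

-- Since `(f)_K ≤ s`, exceeding `2s` by `t` means deviating from the mean by more than `t + s`.
theorem measure_restrict_lt_posPart_le {α : Type*} [MeasurableSpace α] {μ : Measure α}
    {K : Set α} (hK : MeasurableSet K) (hKfin : μ K ≠ ⊤) {f : α → ℝ} {fK s t B : ℝ}
    (havg : fK ≤ s) (ht : 0 < t) (hB : 0 ≤ B)
    (hdev : (μ {x ∈ K | t + s < f x - fK}).toReal ≤ B) :
    μ.restrict K {x | t < max (f x - 2 * s) 0} ≤ ENNReal.ofReal B := by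
  have hsub : {x | t < max (f x - 2 * s) 0} ∩ K ⊆ {x ∈ K | t + s < f x - fK} :=
    fun x ⟨hx, hxK⟩ => ⟨hxK, by linarith [(lt_max_iff.mp hx).resolve_right ht.not_gt]⟩
  rw [Measure.restrict_apply' hK]
  exact (measure_mono hsub).trans ((ENNReal.le_ofReal_iff_toReal_le
    (measure_ne_top_of_subset (fun x hx => hx.1) hKfin) hB).mpr hdev)

theorem stmt2_general (d : ℕ) (A a b M lam : ℝ)
    (hA : 0 < A) (ha : 0 < a) (hb : 0 < b) (hM : 0 < M) (hlam : a < lam)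
    (z : Fin d → ℝ) (ρ : ℝ) (K : Set (Fin d → ℝ))
    (hK : K = Metric.closedBall z ρ)
    (f : (Fin d → ℝ) → ℝ) (hfmeas : Measurable f)
    (fK I : ℝ) (hI : I = ∫ y in K, |f y - fK|)
    (havg : fK ≤ lam * M)
    (hJN : ∀ r : ℝ, a * M < r →
      (volume {x ∈ K | r < f x - fK}).toReal ≤ (A / M) * Real.exp (-(b * r) / M) * I) :
    ∫ x in K, max (f x - 2 * lam * M) 0 ≤
      (2 * A / b) * (b * lam + 1) * Real.exp (-(b * lam)) * I := by
  have hI0 : 0 ≤ I := hI ▸ integral_nonneg fun y => abs_nonneg _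
  have hKfin : volume K ≠ ⊤ := hK ▸ (isCompact_closedBall z ρ).measure_lt_top.ne
  have hKmeas : MeasurableSet K := hK ▸ measurableSet_closedBall
  set C := A / M * exp (-(b * lam)) * I
  have hlevel : ∀ t ∈ Ioi (0 : ℝ), volume.restrict K {x | t < max (f x - 2 * (lam * M)) 0} ≤
      ENNReal.ofReal (C * exp (-(b / M) * t)) := by
    intro t (ht : 0 < t)
    have hexp : A / M * exp (-(b * (t + lam * M)) / M) * I = C * exp (-(b / M) * t) := by
      rw [show -(b * (t + lam * M)) / M = -(b * lam) + -(b / M) * t by field_simp; ring, exp_add]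
      ring
    exact measure_restrict_lt_posPart_le hKmeas hKfin havg ht (by positivity)
      (hexp ▸ hJN _ (by nlinarith))
  calc ∫ x in K, max (f x - 2 * lam * M) 0 ≤ C / (b / M) := by
        simp_rw [mul_assoc 2 lam M]
        exact integral_le_of_measure_lt_le_exp (ae_of_all _ fun x => le_max_right _ _)
          ((hfmeas.sub_const _).max measurable_const).aemeasurable (by positivity)
          (div_pos hb hM) hlevel
    _ = A / b * exp (-(b * lam)) * I := by unfold C; field_simp
    _ ≤ (2 * A / b) * (b * lam + 1) * exp (-(b * lam)) * I := by
        have hbl : 0 < b * lam := mul_pos hb (ha.trans hlam)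
        gcongr
        rw [mul_div_assoc, mul_assoc]
        nlinarith [div_pos hA hb]

/-- Layer-cake estimate: if `f ≥ 0` is measurable on a cube `K`, `M > 0`, the John–Nirenberg
type bound `ℒᵈ({x ∈ K : f(x) − (f)_K > r}) ≤ (A/M) exp(−br/M) ∫_K |f − (f)_K|` holds for all
`r > aM`, and the average `(f)_K ≤ λM` with `λ > a`, then
`∫_K (f − 2λM)₊ ≤ (2A/b)(bλ + 1) exp(−bλ) ∫_K |f − (f)_K|`. -/
theorem stmt2 (d : ℕ) (A a b M lam : ℝ)
    (hA : 0 < A) (ha : 0 < a) (hb : 0 < b) (hM : 0 < M) (hlam : a < lam)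
    (z : Fin d → ℝ) (ρ : ℝ) (hρ : 0 < ρ) (K : Set (Fin d → ℝ))
    (hK : K = Metric.closedBall z ρ)
    (f : (Fin d → ℝ) → ℝ) (hfmeas : Measurable f) (hf0 : ∀ x, 0 ≤ f x)
    (fK I : ℝ) (hfK : fK = ⨍ y in K, f y) (hI : I = ∫ y in K, |f y - fK|)
    (havg : fK ≤ lam * M)
    (hJN : ∀ r : ℝ, a * M < r →
      (volume {x ∈ K | r < f x - fK}).toReal ≤ (A / M) * Real.exp (-(b * r) / M) * I) :
    ∫ x in K, max (f x - 2 * lam * M) 0 ≤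
      (2 * A / b) * (b * lam + 1) * Real.exp (-(b * lam)) * I :=
  stmt2_general d A a b M lam hA ha hb hM hlam z ρ K hK f hfmeas fK I hI havg hJN
end
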